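/- arXiv:1310.3192 — 3 statements merged into one kernel-verified Lean document; each statement's English description precedes it below -/
import Mathlib

section
/- Let Ω ⊂ ℝ^N be bounded open with C² boundary, d the signed distance (positive inside), and ξ ∈ ∂Ω a point satisfying the Fichera condition: either Dd(ξ)·A(ξ)·Dd(ξ) > 0, or (Dd(ξ)·A(ξ)·Dd(ξ) = 0 and Tr(A(ξ)D²d(ξ)) + b(ξ)·Dd(ξ) < 0), where A, b are continuous on cl(Ω) near ξ and A(x) ≥ 0. Then there exist δ > 0 and a ball B centered at ξ so that w(x) := log(δ + d(x)) - log δ is nonnegative on cl(Ω ∩ B), vanishes at ξ, is smooth on Ω ∩ B, and satisfies -Tr(A(x)D²w(x)) - b(x)·Dw(x) ≥ 1 on Ω ∩ B (i.e., w is a barrier at ξ for the linear operator without zero-order term). -/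
open Matrix Filter Topology

/-!
For `w = log (δ + d) - log δ` the operator `-Tr(A D²w) - b·Dw` equals
`q / (δ + d)² - L / (δ + d)` with `q = Dd·A·Dd ≥ 0` and `L = Tr(A D²d) + b·Dd`. Both `q` and `L`
are continuous at `ξ`, and so is `d`, with `d ξ = 0`. If `q ξ > 0`, then `q` stays bounded below
and `L` bounded above near `ξ`, so the first term wins once `δ + d` is small; if `q ξ = 0` and
`L ξ < 0`, then `-L` stays bounded below and the second term alone is `≥ 1` once `δ + d` is small.
-/

theorem Matrix.trace_mul_vecMulVec_self {n R : Type*} [Fintype n] [CommSemiring R]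
    (A : Matrix n n R) (u : n → R) : (A * vecMulVec u u).trace = u ⬝ᵥ (A *ᵥ u) := by
  rw [mul_vecMulVec, trace_vecMulVec, dotProduct_comm]

theorem Matrix.neg_trace_mul_hessian_log_sub_dotProduct {n : Type*} [Fintype n]
    (A M : Matrix n n ℝ) (b u : n → ℝ) (r : ℝ) :
    -(A * (r⁻¹ • M - (r ^ 2)⁻¹ • vecMulVec u u)).trace - b ⬝ᵥ (r⁻¹ • u)
      = u ⬝ᵥ (A *ᵥ u) / r ^ 2 - ((A * M).trace + b ⬝ᵥ u) / r := by
  rw [Matrix.mul_sub, Matrix.mul_smul, Matrix.mul_smul, trace_sub, trace_smul, trace_smul,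
    trace_mul_vecMulVec_self, dotProduct_smul]
  simp only [smul_eq_mul]
  ring

theorem exists_one_le_div_sq_sub_div_of_pos {c : ℝ} (hc : 0 < c) (M : ℝ) :
    ∃ t > 0, ∀ q L r : ℝ, c ≤ q → L ≤ M → 0 < r → r ≤ t → 1 ≤ q / r ^ 2 - L / r := by
  refine ⟨min 1 (c / (|M| + 1)), by positivity, fun q L r hq hL hr hrt => ?_⟩
  have hr1 : r ≤ 1 := hrt.trans (min_le_left _ _)
  have hrc : r * (|M| + 1) ≤ c :=
    (le_div_iff₀ (by positivity)).mp (hrt.trans (min_le_right _ _))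
  have hLM : r * L ≤ r * |M| := mul_le_mul_of_nonneg_left (hL.trans (le_abs_self M)) hr.le
  rw [div_sub_div _ _ (by positivity) hr.ne', le_div_iff₀ (by positivity)]
  nlinarith

theorem one_le_div_sq_sub_div_of_neg {m q L r : ℝ} (hq : 0 ≤ q) (hL : L ≤ -m) (hr : 0 < r)
    (hrm : r ≤ m) : 1 ≤ q / r ^ 2 - L / r := by
  rw [div_sub_div _ _ (by positivity) hr.ne', le_div_iff₀ (by positivity)]
  nlinarith

theorem exists_one_le_div_sq_sub_div_eventually {X : Type*} [TopologicalSpace X]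
    {q L : X → ℝ} {ξ : X} (hq : ContinuousAt q ξ) (hL : ContinuousAt L ξ) (hq₀ : ∀ x, 0 ≤ q x)
    (hξ : 0 < q ξ ∨ (q ξ = 0 ∧ L ξ < 0)) :
    ∃ t > 0, ∀ᶠ x in 𝓝 ξ, ∀ r, 0 < r → r ≤ t → 1 ≤ q x / r ^ 2 - L x / r := by
  rcases hξ with hpos | ⟨-, hneg⟩
  · obtain ⟨t, ht, hbound⟩ := exists_one_le_div_sq_sub_div_of_pos (half_pos hpos) (L ξ + 1)
    refine ⟨t, ht, ?_⟩
    filter_upwards [hq.eventually_const_lt (half_lt_self hpos),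
      hL.eventually_lt_const (lt_add_one (L ξ))] with x hqx hLx r hr hrt
    exact hbound _ _ r hqx.le hLx.le hr hrt
  · refine ⟨-L ξ / 2, by linarith, ?_⟩
    filter_upwards [hL.eventually_lt_const (show L ξ < L ξ / 2 by linarith)] with x hLx r hr hrt
    exact one_le_div_sq_sub_div_of_neg (hq₀ x) (by linarith) hr hrt

theorem stmt15_general {N : ℕ} (Ω : Set (Fin N → ℝ))
    (ξ : Fin N → ℝ)
    (d : (Fin N → ℝ) → ℝ) (hdc : ContinuousAt d ξ) (hdξ : d ξ = 0)
    (hdpos : ∀ x ∈ Ω, 0 < d x)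
    (Dd : (Fin N → ℝ) → (Fin N → ℝ)) (D2d : (Fin N → ℝ) → Matrix (Fin N) (Fin N) ℝ)
    (A : (Fin N → ℝ) → Matrix (Fin N) (Fin N) ℝ) (b : (Fin N → ℝ) → (Fin N → ℝ))
    (hDd : ContinuousAt Dd ξ) (hD2d : ContinuousAt D2d ξ)
    (hA : ContinuousAt A ξ) (hb : ContinuousAt b ξ)
    (hApsd : ∀ x, (A x).PosSemidef)
    (hFichera : 0 < Dd ξ ⬝ᵥ (A ξ *ᵥ Dd ξ) ∨
      (Dd ξ ⬝ᵥ (A ξ *ᵥ Dd ξ) = 0 ∧ (A ξ * D2d ξ).trace + b ξ ⬝ᵥ Dd ξ < 0)) :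
    ∃ δ > (0:ℝ), ∃ ρ > (0:ℝ),
      Real.log (δ + d ξ) - Real.log δ = 0 ∧
      ∀ x ∈ Ω ∩ Metric.ball ξ ρ,
        0 ≤ Real.log (δ + d x) - Real.log δ ∧
        1 ≤ -(A x * ((δ + d x)⁻¹ • D2d x
              - ((δ + d x) ^ 2)⁻¹ • vecMulVec (Dd x) (Dd x))).trace
            - b x ⬝ᵥ ((δ + d x)⁻¹ • Dd x) := by
  have hq : ContinuousAt (fun x => Dd x ⬝ᵥ (A x *ᵥ Dd x)) ξ :=
    (continuous_fst.dotProduct (continuous_snd.matrix_mulVec continuous_fst)).continuousAt.comp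
      (hDd.prodMk hA)
  have hL : ContinuousAt (fun x => (A x * D2d x).trace + b x ⬝ᵥ Dd x) ξ :=
    ((continuous_fst.matrix_mul continuous_snd).matrix_trace.continuousAt.comp (hA.prodMk hD2d)).add
      ((continuous_fst.dotProduct continuous_snd).continuousAt.comp (hb.prodMk hDd))
  obtain ⟨t, ht, hbarrier⟩ := exists_one_le_div_sq_sub_div_eventually hq hL
    (fun x => (hApsd x).dotProduct_mulVec_nonneg (Dd x)) hFichera
  obtain ⟨ρ, hρ, hball⟩ := Metric.eventually_nhds_iff.mp
    (hbarrier.and (hdc.eventually_lt_const (show d ξ < t / 2 by linarith)))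
  refine ⟨t / 2, half_pos ht, ρ, hρ, by rw [hdξ, add_zero, sub_self], ?_⟩
  rintro x ⟨hxΩ, hxρ⟩
  obtain ⟨hbarrier_x, hdx⟩ := hball hxρ
  have hd := hdpos x hxΩ
  refine ⟨sub_nonneg.mpr (Real.log_le_log (half_pos ht) (by linarith)), ?_⟩
  rw [neg_trace_mul_hessian_log_sub_dotProduct]
  exact hbarrier_x _ (by positivity) (by linarith)

/-- at a boundary point ξ satisfying the Fichera condition, for
suitable δ > 0 and a ball B = B(ξ,ρ), the function w = log(δ+d) - log δ is a
barrier: nonnegative on Ω ∩ B, vanishing at ξ, and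
-Tr(A·D²w) - b·Dw ≥ 1 on Ω ∩ B, where Dw = (δ+d)⁻¹Dd and
D²w = (δ+d)⁻¹D²d - (δ+d)⁻²Dd⊗Dd. -/
theorem stmt15 {N : ℕ} (Ω : Set (Fin N → ℝ)) (hΩ : IsOpen Ω)
    (ξ : Fin N → ℝ) (hξ : ξ ∈ frontier Ω)
    (d : (Fin N → ℝ) → ℝ) (hdc : ContinuousAt d ξ) (hdξ : d ξ = 0)
    (hdpos : ∀ x ∈ Ω, 0 < d x)
    (Dd : (Fin N → ℝ) → (Fin N → ℝ)) (D2d : (Fin N → ℝ) → Matrix (Fin N) (Fin N) ℝ)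
    (A : (Fin N → ℝ) → Matrix (Fin N) (Fin N) ℝ) (b : (Fin N → ℝ) → (Fin N → ℝ))
    (hDd : ContinuousAt Dd ξ) (hD2d : ContinuousAt D2d ξ)
    (hA : ContinuousAt A ξ) (hb : ContinuousAt b ξ)
    (hApsd : ∀ x, (A x).PosSemidef)
    (hFichera : 0 < Dd ξ ⬝ᵥ (A ξ *ᵥ Dd ξ) ∨
      (Dd ξ ⬝ᵥ (A ξ *ᵥ Dd ξ) = 0 ∧ (A ξ * D2d ξ).trace + b ξ ⬝ᵥ Dd ξ < 0)) :
    ∃ δ > (0:ℝ), ∃ ρ > (0:ℝ),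
      Real.log (δ + d ξ) - Real.log δ = 0 ∧
      ∀ x ∈ Ω ∩ Metric.ball ξ ρ,
        0 ≤ Real.log (δ + d x) - Real.log δ ∧
        1 ≤ -(A x * ((δ + d x)⁻¹ • D2d x
              - ((δ + d x) ^ 2)⁻¹ • vecMulVec (Dd x) (Dd x))).trace
            - b x ⬝ᵥ ((δ + d x)⁻¹ • Dd x) :=
  stmt15_general Ω ξ d hdc hdξ hdpos Dd D2d A b hDd hD2d hA hb hApsd hFichera
end

section
/- Let F satisfy degenerate ellipticity (F(x,r,p,X+Y) ≤ F(x,r,p,X) for Y ≥ 0) and positive α-homogeneity (F(x,τr,τp,τX) = τ^α F(x,r,p,X) for τ ≥ 0). Let Ω' be open, u ∈ USC(cl(Ω)) with cl(Ω) ⊂ Ω' a viscosity subsolution of F = 0 in Ω with u ≤ 0 on ∂Ω in the viscosity sense. Then the function ũ defined by ũ(x) = max(u(x), 0) for x ∈ cl(Ω) and ũ(x) = 0 for x ∈ Ω' \ cl(Ω) is an upper semicontinuous viscosity subsolution of F = 0 in all of Ω'. -/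
/-!
Where `ũ > 0` we are in `closure Ω` with `ũ = u`, and a test function touching `ũ` from above
there touches `u` from above on `closure Ω`; the relaxed boundary condition `max (u ξ) (F …) ≤ 0`
still yields `F … ≤ 0`. Where `ũ = 0`, nonnegativity of `ũ` makes the test function have a local
minimum, so its gradient vanishes and its Hessian is positive semidefinite; ellipticity and
homogeneity (with `τ = 0`) then give `F x 0 0 D²ψ ≤ F x 0 0 0 = 0`. Upper semicontinuity holds
because gluing the nonnegative function `max u 0` on the closed set `closure Ω` to `0` outside
keeps it upper semicontinuous.
-/

open Filter Topology

theorem IsLocalMin.deriv_deriv_nonneg {f : ℝ → ℝ} {a : ℝ} (h : IsLocalMin f a)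
    (hc : ContinuousAt f a) : 0 ≤ deriv (deriv f) a := by
  by_contra! hneg
  -- a strict second-order maximum that is also a minimum forces `f` to be locally constant
  have hmax := isLocalMax_of_deriv_deriv_neg hneg h.deriv_eq_zero hc
  have hconst : f =ᶠ[𝓝 a] fun _ => f a := (h.and hmax).mono fun _ hy => le_antisymm hy.2 hy.1
  have hderiv : deriv f =ᶠ[𝓝 a] fun _ => 0 :=
    hconst.eventuallyEq_nhds.mono fun _ hy => hy.deriv_eq.trans (deriv_const _ _)
  simp [hderiv.deriv_eq] at hneg

theorem IsLocalMin.fderiv_fderiv_apply_self_nonneg {E : Type*} [NormedAddCommGroup E]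
    [NormedSpace ℝ E] {ψ : E → ℝ} {a : E} (h : IsLocalMin ψ a) (hψ : Differentiable ℝ ψ)
    (hψ' : DifferentiableAt ℝ (fderiv ℝ ψ) a) (v : E) :
    0 ≤ fderiv ℝ (fderiv ℝ ψ) a v v := by
  set γ : ℝ → E := fun t => a + t • v
  have hγ : ∀ t, HasDerivAt γ v t := fun t => by
    simpa [γ] using ((hasDerivAt_id t).smul_const v).const_add a
  have hγ0 : γ 0 = a := by simp [γ]
  have hderiv : deriv (ψ ∘ γ) = fun t => fderiv ℝ ψ (γ t) v :=
    funext fun t => ((hψ _).hasFDerivAt.comp_hasDerivAt t (hγ t)).deriv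
  have hderiv2 : HasDerivAt (fun t => fderiv ℝ ψ (γ t) v) (fderiv ℝ (fderiv ℝ ψ) a v v) 0 := by
    rw [← hγ0] at hψ' ⊢
    simpa using (hψ'.hasFDerivAt.comp_hasDerivAt 0 (hγ 0)).clm_apply (hasDerivAt_const 0 v)
  have hmin : IsLocalMin (ψ ∘ γ) 0 :=
    IsLocalMin.comp_continuous (by rwa [hγ0]) (hγ 0).continuousAt
  simpa [hderiv, hderiv2.deriv] using
    hmin.deriv_deriv_nonneg ((hψ _).continuousAt.comp (hγ 0).continuousAt)

theorem UpperSemicontinuousOn.ite_of_isClosed {X : Type*} [TopologicalSpace X] {s : Set X}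
    [DecidablePred (· ∈ s)] {β : Type*} [Preorder β] {f g : X → β} (hf : UpperSemicontinuousOn f s) (hs : IsClosed s)
    (hg : UpperSemicontinuous g) (hgf : ∀ x ∈ s, g x ≤ f x) :
    UpperSemicontinuous fun x => if x ∈ s then f x else g x := by
  intro x c hc
  by_cases hx : x ∈ s
  · simp only [hx, if_true] at hc
    filter_upwards [eventually_nhdsWithin_iff.1 (hf x hx c hc),
      hg x c ((hgf x hx).trans_lt hc)] with y hfy hgy
    split_ifs with hy
    exacts [hfy hy, hgy]
  · simp only [hx, if_false] at hc
    filter_upwards [hs.isOpen_compl.mem_nhds hx, hg x c hc] with y hy hgy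
    simpa [show y ∉ s from hy] using hgy

theorem IsMaxOn.of_le_of_eq {α β : Type*} [Preorder β] {f g : α → β} {s t : Set α} {a : α}
    (h : IsMaxOn g t a) (hst : s ⊆ t) (hfg : ∀ y ∈ s, f y ≤ g y) (ha : f a = g a) :
    IsMaxOn f s a :=
  fun y hy => (hfg y hy).trans (ha ▸ h (hst hy))

section FullyNonlinear

variable {E : Type*} [NormedAddCommGroup E] [NormedSpace ℝ E]

def DegenerateElliptic (F : E → ℝ → (E →L[ℝ] ℝ) → (E →L[ℝ] E →L[ℝ] ℝ) → ℝ) : Prop :=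
  ∀ x r p (X Y : E →L[ℝ] E →L[ℝ] ℝ), (∀ v, 0 ≤ Y v v) → F x r p (X + Y) ≤ F x r p X

def PositivelyHomogeneous (F : E → ℝ → (E →L[ℝ] ℝ) → (E →L[ℝ] E →L[ℝ] ℝ) → ℝ) (α : ℝ) :
    Prop :=
  ∀ x r p X (τ : ℝ), 0 ≤ τ → F x (τ * r) (τ • p) (τ • X) = τ ^ α * F x r p X

variable {F : E → ℝ → (E →L[ℝ] ℝ) → (E →L[ℝ] E →L[ℝ] ℝ) → ℝ}

theorem PositivelyHomogeneous.apply_zero {α : ℝ} (hF : PositivelyHomogeneous F α) (hα : α ≠ 0)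
    (x : E) : F x 0 0 0 = 0 := by
  have h := hF x 0 0 0 0 le_rfl
  have h0 : (0 : ℝ) • (0 : E →L[ℝ] E →L[ℝ] ℝ) = 0 := by ext; simp
  rwa [mul_zero, smul_zero, h0, Real.zero_rpow hα, zero_mul] at h

theorem DegenerateElliptic.apply_le_apply_zero (hF : DegenerateElliptic F) {x : E} {r : ℝ}
    {p : E →L[ℝ] ℝ} {X : E →L[ℝ] E →L[ℝ] ℝ} (hX : ∀ v, 0 ≤ X v v) :
    F x r p X ≤ F x r p 0 := by
  convert hF x r p 0 X hX using 2
  exact (zero_add X).symm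

theorem IsLocalMin.apply_zero_fderiv_fderiv_nonpos {α : ℝ} (hF : DegenerateElliptic F)
    (hhom : PositivelyHomogeneous F α) (hα : α ≠ 0) {ψ : E → ℝ} (hψ : ContDiff ℝ 2 ψ) {a : E}
    (h : IsLocalMin ψ a) : F a 0 (fderiv ℝ ψ a) (fderiv ℝ (fderiv ℝ ψ) a) ≤ 0 := by
  have hD2 : ∀ v, 0 ≤ fderiv ℝ (fderiv ℝ ψ) a v v :=
    h.fderiv_fderiv_apply_self_nonneg (hψ.differentiable (by norm_num))
      ((hψ.fderiv_right (m := 1) (by norm_num)).differentiable one_ne_zero a)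
  rw [h.fderiv_eq_zero]
  exact (hF.apply_le_apply_zero hD2).trans (hhom.apply_zero hα a).le

end FullyNonlinear

open Classical in

theorem stmt17_general {N : ℕ}
    (F : EuclideanSpace ℝ (Fin N) → ℝ → (EuclideanSpace ℝ (Fin N) →L[ℝ] ℝ) →
      (EuclideanSpace ℝ (Fin N) →L[ℝ] EuclideanSpace ℝ (Fin N) →L[ℝ] ℝ) → ℝ)
    (hell : ∀ x r p (X Y : EuclideanSpace ℝ (Fin N) →L[ℝ] EuclideanSpace ℝ (Fin N) →L[ℝ] ℝ),
      (∀ v, 0 ≤ Y v v) → F x r p (X + Y) ≤ F x r p X)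
    (α : ℝ) (hα : 0 < α)
    (hhom : ∀ x r p X (τ : ℝ), 0 ≤ τ → F x (τ * r) (τ • p) (τ • X) = τ ^ α * F x r p X)
    (Ω Ω' : Set (EuclideanSpace ℝ (Fin N)))
    (hΩ'o : IsOpen Ω') (hsub : closure Ω ⊆ Ω')
    (u : EuclideanSpace ℝ (Fin N) → ℝ)
    (husc : UpperSemicontinuousOn u (closure Ω))
    (hsubsol : ∀ ψ : EuclideanSpace ℝ (Fin N) → ℝ, ContDiff ℝ 2 ψ →
      ∀ ξ ∈ closure Ω, IsMaxOn (fun y => u y - ψ y) (closure Ω) ξ →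
        (ξ ∈ Ω → F ξ (u ξ) (fderiv ℝ ψ ξ) (fderiv ℝ (fderiv ℝ ψ) ξ) ≤ 0) ∧
        (ξ ∈ frontier Ω →
          max (u ξ) (F ξ (u ξ) (fderiv ℝ ψ ξ) (fderiv ℝ (fderiv ℝ ψ) ξ)) ≤ 0)) :
    UpperSemicontinuousOn
      (fun x => if x ∈ closure Ω then max (u x) 0 else 0) Ω' ∧
    ∀ ψ : EuclideanSpace ℝ (Fin N) → ℝ, ContDiff ℝ 2 ψ →
      ∀ x₀ ∈ Ω', IsMaxOn
          (fun y => (if y ∈ closure Ω then max (u y) 0 else 0) - ψ y) Ω' x₀ →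
        F x₀ (if x₀ ∈ closure Ω then max (u x₀) 0 else 0)
          (fderiv ℝ ψ x₀) (fderiv ℝ (fderiv ℝ ψ) x₀) ≤ 0 := by
  set ũ : EuclideanSpace ℝ (Fin N) → ℝ := fun x => if x ∈ closure Ω then max (u x) 0 else 0
  refine ⟨((husc.sup upperSemicontinuousOn_const).ite_of_isClosed isClosed_closure
    upperSemicontinuous_const fun _ _ => le_max_right _ _).upperSemicontinuousOn Ω', ?_⟩
  intro ψ hψ x₀ hx₀ (hmax : IsMaxOn (fun y => ũ y - ψ y) Ω' x₀)
  show F x₀ (ũ x₀) (fderiv ℝ ψ x₀) (fderiv ℝ (fderiv ℝ ψ) x₀) ≤ 0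
  by_cases hpos : x₀ ∈ closure Ω ∧ 0 < u x₀
  · obtain ⟨hx₀Ω, hu₀⟩ := hpos
    have hũ₀ : ũ x₀ = u x₀ := by simp [ũ, hx₀Ω, hu₀.le]
    have hmaxΩ : IsMaxOn (fun y => u y - ψ y) (closure Ω) x₀ :=
      hmax.of_le_of_eq hsub (fun y hy => by simp [ũ, hy]) (by rw [hũ₀])
    obtain ⟨hint, hbdry⟩ := hsubsol ψ hψ x₀ hx₀Ω hmaxΩ
    rw [hũ₀]
    by_cases hx₀int : x₀ ∈ Ω
    · exact hint hx₀int
    · exact (le_max_right _ _).trans (hbdry ⟨hx₀Ω, fun h => hx₀int (interior_subset h)⟩)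
  · have hũ₀ : ũ x₀ = 0 := by
      by_cases hx₀Ω : x₀ ∈ closure Ω
      · simp [ũ, hx₀Ω, not_lt.1 fun h => hpos ⟨hx₀Ω, h⟩]
      · simp [ũ, hx₀Ω]
    have hũ_nonneg : ∀ x, 0 ≤ ũ x := fun x => by
      by_cases hx : x ∈ closure Ω <;> simp [ũ, hx]
    have hmax' : IsMaxOn (fun y => -ψ y) Ω' x₀ :=
      hmax.of_le_of_eq subset_rfl (fun y _ => by linarith [hũ_nonneg y]) (by rw [hũ₀, zero_sub])
    have hmin : IsLocalMin ψ x₀ := by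
      simpa using hmax'.neg.isLocalMin (hΩ'o.mem_nhds hx₀)
    rw [hũ₀]
    exact hmin.apply_zero_fderiv_fderiv_nonpos hell hhom hα.ne' hψ

open Classical in
/-- if u ∈ USC(cl Ω) is a viscosity subsolution of F = 0 in Ω with
u ≤ 0 on ∂Ω in the viscosity sense (relaxed boundary condition), and F is
degenerate elliptic and positively α-homogeneous, then ũ = max(u,0) extended by 0
outside cl Ω is an USC viscosity subsolution of F = 0 in any open Ω' ⊇ cl Ω. -/
theorem stmt17 {N : ℕ}
    (F : EuclideanSpace ℝ (Fin N) → ℝ → (EuclideanSpace ℝ (Fin N) →L[ℝ] ℝ) →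
      (EuclideanSpace ℝ (Fin N) →L[ℝ] EuclideanSpace ℝ (Fin N) →L[ℝ] ℝ) → ℝ)
    (hell : ∀ x r p (X Y : EuclideanSpace ℝ (Fin N) →L[ℝ] EuclideanSpace ℝ (Fin N) →L[ℝ] ℝ),
      (∀ v, 0 ≤ Y v v) → F x r p (X + Y) ≤ F x r p X)
    (α : ℝ) (hα : 0 < α)
    (hhom : ∀ x r p X (τ : ℝ), 0 ≤ τ → F x (τ * r) (τ • p) (τ • X) = τ ^ α * F x r p X)
    (Ω Ω' : Set (EuclideanSpace ℝ (Fin N)))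
    (hΩo : IsOpen Ω) (hΩ'o : IsOpen Ω') (hsub : closure Ω ⊆ Ω')
    (u : EuclideanSpace ℝ (Fin N) → ℝ)
    (husc : UpperSemicontinuousOn u (closure Ω))
    (hsubsol : ∀ ψ : EuclideanSpace ℝ (Fin N) → ℝ, ContDiff ℝ 2 ψ →
      ∀ ξ ∈ closure Ω, IsMaxOn (fun y => u y - ψ y) (closure Ω) ξ →
        (ξ ∈ Ω → F ξ (u ξ) (fderiv ℝ ψ ξ) (fderiv ℝ (fderiv ℝ ψ) ξ) ≤ 0) ∧
        (ξ ∈ frontier Ω →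
          max (u ξ) (F ξ (u ξ) (fderiv ℝ ψ ξ) (fderiv ℝ (fderiv ℝ ψ) ξ)) ≤ 0)) :
    UpperSemicontinuousOn
      (fun x => if x ∈ closure Ω then max (u x) 0 else 0) Ω' ∧
    ∀ ψ : EuclideanSpace ℝ (Fin N) → ℝ, ContDiff ℝ 2 ψ →
      ∀ x₀ ∈ Ω', IsMaxOn
          (fun y => (if y ∈ closure Ω then max (u y) 0 else 0) - ψ y) Ω' x₀ →
        F x₀ (if x₀ ∈ closure Ω then max (u x₀) 0 else 0)
          (fderiv ℝ ψ x₀) (fderiv ℝ (fderiv ℝ ψ) x₀) ≤ 0 :=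
  stmt17_general F hell α hα hhom Ω Ω' hΩ'o hsub u husc hsubsol
end

section
/- Consider F[u] = x²·u' on Ω = (-1,1). Then μ₁(F,Ω) ≥ 0 (witnessed by φ ≡ 1 on any Ω' ⊃ [-1,1]), and the only viscosity solution U ∈ C([-1,1]) of the eigenvalue problem x²U' = 0 in (-1,1) with U = 0 on {-1,1} and U ≥ 0 is U ≡ 0; in particular no positive principal eigenfunction at level μ₁ = 0 exists. -/
/-!
For a nonnegative subsolution `U` and a strictly increasing test function `ψ`, a maximum of
`U - ψ` inside `(-1, 1)` can only sit at `0`, since elsewhere the test inequality `x² ψ' ≤ 0`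
fails. Testing with `ψ = (U b / 2) exp (k (x - b))`, which lies below `U` at `b` and above it at
`±1`, gives `U 0 > (U b / 2) exp (-k b)` for every `k > 0`. For `b < 0` this is absurd as
`k → ∞`, so `U = 0` on `[-1, 0]`; then `U 0 = 0` rules out `U b > 0` for `b > 0` as well.
-/

open Set Filter Real Topology

/-- Viscosity subsolutions of `x² u' = 0` on `s`. -/
def IsViscositySubsolution (U : ℝ → ℝ) (s : Set ℝ) : Prop :=
  ∀ ψ : ℝ → ℝ, ContDiff ℝ 2 ψ → ∀ x₀ ∈ s,
    IsMaxOn (fun y => U y - ψ y) s x₀ → x₀ ^ 2 * deriv ψ x₀ ≤ 0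

lemma IsViscositySubsolution.eq_zero_of_isMaxOn {U ψ : ℝ → ℝ} {s : Set ℝ} {x₀ : ℝ}
    (hU : IsViscositySubsolution U s) (hψ : ContDiff ℝ 2 ψ) (hψ' : 0 < deriv ψ x₀)
    (hx₀ : x₀ ∈ s) (hmax : IsMaxOn (fun y => U y - ψ y) s x₀) : x₀ = 0 := by
  have := hU ψ hψ x₀ hx₀ hmax
  exact pow_eq_zero_iff two_ne_zero |>.mp
    (le_antisymm (nonpos_of_mul_nonpos_left this hψ') (sq_nonneg x₀))

lemma exists_mem_Ioo_isMaxOn_Icc {f : ℝ → ℝ} {a b c : ℝ} (hf : ContinuousOn f (Icc a c))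
    (hb : b ∈ Icc a c) (hab : f a < f b) (hcb : f c < f b) :
    ∃ x₀ ∈ Ioo a c, IsMaxOn f (Icc a c) x₀ := by
  obtain ⟨x₀, hx₀, hmax⟩ := isCompact_Icc.exists_isMaxOn ⟨b, hb⟩ hf
  refine ⟨x₀, ⟨hx₀.1.lt_of_ne ?_, hx₀.2.lt_of_ne ?_⟩, hmax⟩
  · rintro rfl
    exact (hmax hb).not_gt hab
  · rintro rfl
    exact (hmax hb).not_gt hcb

lemma hasDerivAt_mul_exp_mul_sub (c k b x : ℝ) :
    HasDerivAt (fun x => c * exp (k * (x - b))) (c * (exp (k * (x - b)) * k)) x := by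
  have hlin : HasDerivAt (fun x : ℝ => k * (x - b)) k x := by
    simpa using ((hasDerivAt_id x).sub_const b).const_mul k
  exact hlin.exp.const_mul c

section Subsolution

variable {U : ℝ → ℝ} (hcont : ContinuousOn U (Icc (-1) 1))
  (hsub : IsViscositySubsolution U (Ioo (-1) 1)) (hU₁ : U (-1) = 0) (hU₂ : U 1 = 0)
include hcont hsub hU₁ hU₂

lemma IsViscositySubsolution.sub_le_sub_at_zero {ψ : ℝ → ℝ} (hψ : ContDiff ℝ 2 ψ)
    (hψ_pos : ∀ x, 0 < ψ x) (hψ' : ∀ x, 0 < deriv ψ x) {b : ℝ} (hb : b ∈ Ioo (-1) 1)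
    (hψb : ψ b < U b) : U b - ψ b ≤ U 0 - ψ 0 := by
  obtain ⟨x₀, hx₀, hmax⟩ := exists_mem_Ioo_isMaxOn_Icc (f := fun y => U y - ψ y)
    (hcont.sub hψ.continuous.continuousOn) (Ioo_subset_Icc_self hb)
    (by linarith [hψ_pos (-1)]) (by linarith [hψ_pos 1])
  obtain rfl : x₀ = 0 :=
    hsub.eq_zero_of_isMaxOn hψ (hψ' x₀) hx₀ (hmax.on_subset Ioo_subset_Icc_self)
  exact hmax (Ioo_subset_Icc_self hb)

lemma IsViscositySubsolution.mul_exp_lt_at_zero {b : ℝ} (hb : b ∈ Ioo (-1) 1) (hUb : 0 < U b)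
    {k : ℝ} (hk : 0 < k) : U b / 2 * exp (k * (0 - b)) < U 0 := by
  have hψ : ContDiff ℝ 2 fun x => U b / 2 * exp (k * (x - b)) := by fun_prop
  have hψ' (x : ℝ) : 0 < deriv (fun x => U b / 2 * exp (k * (x - b))) x := by
    rw [(hasDerivAt_mul_exp_mul_sub _ k b x).deriv]
    positivity
  have := hsub.sub_le_sub_at_zero hcont hU₁ hU₂ hψ (fun x => by positivity) hψ' hb
    (by simp only [sub_self, mul_zero, exp_zero, mul_one]; linarith)
  simp only [sub_self, mul_zero, exp_zero, mul_one] at this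
  linarith

variable (hU_nonneg : ∀ x ∈ Icc (-1 : ℝ) 1, 0 ≤ U x)
include hU_nonneg

lemma IsViscositySubsolution.eq_zero_of_neg {b : ℝ} (hb : b ∈ Ioo (-1) 0) : U b = 0 := by
  have hb' : b ∈ Ioo (-1 : ℝ) 1 := ⟨hb.1, hb.2.trans one_pos⟩
  refine le_antisymm (not_lt.mp fun hUb => ?_) (hU_nonneg b (Ioo_subset_Icc_self hb'))
  have hunbounded : Tendsto (fun k => U b / 2 * exp (k * (0 - b))) atTop atTop :=
    (tendsto_exp_atTop.comp (tendsto_id.atTop_mul_const (by linarith [hb.2]))).const_mul_atTop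
      (half_pos hUb)
  obtain ⟨k, hk, hk_big⟩ :=
    ((eventually_gt_atTop 0).and (hunbounded.eventually_ge_atTop (U 0))).exists
  exact (hsub.mul_exp_lt_at_zero hcont hU₁ hU₂ hb' hUb hk).not_ge hk_big

lemma IsViscositySubsolution.eq_zero_of_pos (hU₀ : U 0 = 0) {b : ℝ} (hb : b ∈ Ioo 0 1) :
    U b = 0 := by
  have hb' : b ∈ Ioo (-1 : ℝ) 1 := ⟨by linarith [hb.1], hb.2⟩
  refine le_antisymm (not_lt.mp fun hUb => ?_) (hU_nonneg b (Ioo_subset_Icc_self hb'))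
  have := hsub.mul_exp_lt_at_zero hcont hU₁ hU₂ hb' hUb one_pos
  rw [hU₀] at this
  exact this.not_ge (by positivity)

end Subsolution

lemma ContinuousOn.eqOn_Icc_of_eqOn_Ioo {f g : ℝ → ℝ} {a b : ℝ} (hab : a < b)
    (hf : ContinuousOn f (Icc a b)) (hg : ContinuousOn g (Icc a b)) (h : EqOn f g (Ioo a b)) :
    EqOn f g (Icc a b) :=
  h.of_subset_closure hf hg Ioo_subset_Icc_self (closure_Ioo hab.ne).ge

/-- for F[u] = x²u' on Ω = (-1,1): μ₁(F,Ω) ≥ 0, witnessed by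
φ ≡ 1 on an open neighbourhood of [-1,1]; and the only nonnegative continuous
viscosity solution U of x²U' = 0 in (-1,1) with U(±1) = 0 is U ≡ 0 — no positive
principal eigenfunction at level μ₁ = 0 exists. -/
theorem stmt19 :
    (∃ Ω' : Set ℝ, IsOpen Ω' ∧ Set.Icc (-1:ℝ) 1 ⊆ Ω' ∧
      ∃ φ : ℝ → ℝ, ContDiffOn ℝ 2 φ Ω' ∧ (∀ x ∈ Ω', 0 < φ x) ∧
        ∀ x ∈ Ω', 0 ≤ x ^ 2 * deriv φ x) ∧
    (∀ U : ℝ → ℝ, ContinuousOn U (Set.Icc (-1) 1) →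
      -- viscosity subsolution of x²U' = 0 in (-1,1)
      (∀ ψ : ℝ → ℝ, ContDiff ℝ 2 ψ → ∀ x₀ ∈ Set.Ioo (-1:ℝ) 1,
        IsMaxOn (fun y => U y - ψ y) (Set.Ioo (-1) 1) x₀ →
          x₀ ^ 2 * deriv ψ x₀ ≤ 0) →
      -- viscosity supersolution of x²U' = 0 in (-1,1)
      (∀ ψ : ℝ → ℝ, ContDiff ℝ 2 ψ → ∀ x₀ ∈ Set.Ioo (-1:ℝ) 1,
        IsMinOn (fun y => U y - ψ y) (Set.Ioo (-1) 1) x₀ →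
          0 ≤ x₀ ^ 2 * deriv ψ x₀) →
      U (-1) = 0 → U 1 = 0 → (∀ x ∈ Set.Icc (-1:ℝ) 1, 0 ≤ U x) →
      ∀ x ∈ Set.Icc (-1:ℝ) 1, U x = 0) := by
  refine ⟨⟨univ, isOpen_univ, subset_univ _, fun _ => 1, contDiffOn_const,
    fun _ _ => one_pos, fun x _ => by simp⟩, ?_⟩
  intro U hcont (hsub : IsViscositySubsolution U (Ioo (-1) 1)) _ hU₁ hU₂ hU_nonneg
  have hleft : EqOn U 0 (Icc (-1) 0) :=
    (hcont.mono (Icc_subset_Icc_right zero_le_one)).eqOn_Icc_of_eqOn_Ioo neg_one_lt_zero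
      continuousOn_const fun b hb => hsub.eq_zero_of_neg hcont hU₁ hU₂ hU_nonneg hb
  have hU₀ : U 0 = 0 := hleft (right_mem_Icc.mpr neg_one_lt_zero.le)
  have hright : EqOn U 0 (Icc 0 1) :=
    (hcont.mono (Icc_subset_Icc_left neg_one_lt_zero.le)).eqOn_Icc_of_eqOn_Ioo one_pos
      continuousOn_const fun b hb => hsub.eq_zero_of_pos hcont hU₁ hU₂ hU_nonneg hU₀ hb
  rw [← Icc_union_Icc_eq_Icc neg_one_lt_zero.le zero_le_one]
  exact hleft.union hright
end
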